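/- arXiv:1802.08764 — 3 statements merged into one kernel-verified Lean document; each statement's English description precedes it below -/
import Mathlib

section
/- For real numbers 0 < H ≤ T and a vector s ∈ [0,H]^d, the Lebesgue measure of the symmetric difference between the cube [0,T]^d and its translate [0,T]^d - s is at most 2(T^d - (T-H)^d). -/
open MeasureTheory Set

/-- For `0 < H ≤ T` and `s ∈ [0,H]^d`, the Lebesgue measure of the symmetric
difference between the cube `[0,T]^d` and its translate `[0,T]^d - s` is at most
`2 (T^d - (T-H)^d)`. -/
theorem symmDiff_cube_translate_measure_le (d : ℕ) (hd : 1 ≤ d) (H T : ℝ)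
    (hH : 0 < H) (hHT : H ≤ T) (s : Fin d → ℝ) (hs : ∀ i, s i ∈ Icc 0 H) :
    volume (symmDiff {t : Fin d → ℝ | ∀ i, t i ∈ Icc 0 T}
        ((fun t => t - s) '' {t : Fin d → ℝ | ∀ i, t i ∈ Icc 0 T})) ≤
      ENNReal.ofReal (2 * (T ^ d - (T - H) ^ d)) := by
  have hs0 : ∀ i, 0 ≤ s i := fun i => (hs i).1
  have hsH : ∀ i, s i ≤ H := fun i => (hs i).2
  have hAeq : {t : Fin d → ℝ | ∀ i, t i ∈ Icc 0 T}
      = Set.pi Set.univ (fun _ : Fin d => Icc (0:ℝ) T) := by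
    ext t; simp only [mem_setOf_eq, Set.mem_univ_pi]
  have hBeq : (fun t => t - s) '' {t : Fin d → ℝ | ∀ i, t i ∈ Icc 0 T}
      = Set.pi Set.univ (fun i : Fin d => Icc (-s i) (T - s i)) := by
    ext t
    constructor
    · rintro ⟨u, hu, rfl⟩ i _
      have h := hu i
      rw [mem_Icc] at h ⊢
      simp only [Pi.sub_apply]
      constructor <;> linarith [h.1, h.2]
    · intro ht
      refine ⟨t + s, fun i => ?_, by simp⟩
      have h := ht i (mem_univ i)
      rw [mem_Icc] at h ⊢
      simp only [Pi.add_apply]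
      constructor <;> linarith [h.1, h.2]
  rw [hBeq, hAeq]
  set A := Set.pi Set.univ (fun _ : Fin d => Icc (0:ℝ) T)
  set B := Set.pi Set.univ (fun i : Fin d => Icc (-s i) (T - s i))
  have hABinter : A ∩ B = Set.pi Set.univ (fun i : Fin d => Icc (0:ℝ) (T - s i)) := by
    rw [← Set.pi_inter_distrib]
    refine Set.pi_congr rfl (fun i _ => ?_)
    rw [Icc_inter_Icc]
    have h1 : (0:ℝ) ⊔ -s i = 0 := sup_eq_left.mpr (by linarith [hs0 i])
    have h2 : T ⊓ (T - s i) = T - s i := inf_eq_right.mpr (by linarith [hs0 i])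
    rw [h1, h2]
  have hmA : MeasurableSet A := MeasurableSet.univ_pi (fun i => measurableSet_Icc)
  have hmB : MeasurableSet B := MeasurableSet.univ_pi (fun i => measurableSet_Icc)
  have hvA : volume A = ENNReal.ofReal (T ^ d) := by
    rw [volume_pi_pi]
    simp only [Real.volume_Icc, sub_zero]
    rw [Finset.prod_const, ← ENNReal.ofReal_pow (le_trans hH.le hHT)]
    simp
  have hvB : volume B = ENNReal.ofReal (T ^ d) := by
    rw [volume_pi_pi]
    simp only [Real.volume_Icc, sub_neg_eq_add, sub_add_cancel]
    rw [Finset.prod_const, ← ENNReal.ofReal_pow (le_trans hH.le hHT)]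
    simp
  have hPnn : ∀ i ∈ Finset.univ, (0:ℝ) ≤ T - s i := fun i _ => by linarith [hsH i]
  have hvI : volume (A ∩ B) = ENNReal.ofReal (∏ i, (T - s i)) := by
    rw [hABinter, volume_pi_pi]
    simp only [Real.volume_Icc, sub_zero]
    rw [ENNReal.ofReal_prod_of_nonneg hPnn]
  have hPle : ∏ i, (T - s i) ≤ T ^ d := by
    calc ∏ i, (T - s i) ≤ ∏ _i : Fin d, T :=
          Finset.prod_le_prod hPnn (fun i _ => by linarith [hs0 i])
      _ = T ^ d := by simp
  have hPge : (T - H) ^ d ≤ ∏ i, (T - s i) := by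
    calc (T - H) ^ d = ∏ _i : Fin d, (T - H) := by simp
      _ ≤ ∏ i, (T - s i) :=
          Finset.prod_le_prod (fun i _ => by linarith) (fun i _ => by linarith [hsH i])
  have hIne : volume (A ∩ B) ≠ ⊤ := by rw [hvI]; exact ENNReal.ofReal_ne_top
  have key : ∀ C : Set (Fin d → ℝ), volume C = ENNReal.ofReal (T ^ d) →
      volume (C \ (A ∩ B)) ≤ ENNReal.ofReal (T ^ d - (T - H) ^ d) →
        True := fun _ _ _ => trivial
  have hdiff : ∀ (C D : Set (Fin d → ℝ)), A ∩ B ⊆ C → volume C = ENNReal.ofReal (T ^ d) →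
      volume (C \ D) ≤ volume (C \ (A ∩ B)) →
      volume (C \ D) ≤ ENNReal.ofReal (T ^ d - (T - H) ^ d) := by
    intro C D hsub hvC hle
    refine le_trans hle ?_
    rw [measure_diff hsub (hmA.inter hmB).nullMeasurableSet hIne, hvC, hvI,
      ← ENNReal.ofReal_sub _ (le_trans (pow_nonneg (by linarith) d) hPge)]
    exact ENNReal.ofReal_le_ofReal (by linarith)
  have h1 : volume (A \ B) ≤ ENNReal.ofReal (T ^ d - (T - H) ^ d) := by
    refine hdiff A B inter_subset_left hvA ?_
    exact measure_mono (fun x hx => ⟨hx.1, fun h => hx.2 h.2⟩)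
  have h2 : volume (B \ A) ≤ ENNReal.ofReal (T ^ d - (T - H) ^ d) := by
    refine hdiff B A inter_subset_right hvB ?_
    exact measure_mono (fun x hx => ⟨hx.1, fun h => hx.2 h.1⟩)
  calc volume (symmDiff A B) ≤ volume (A \ B) + volume (B \ A) := by
        rw [Set.symmDiff_def]; exact measure_union_le _ _
    _ ≤ ENNReal.ofReal (T ^ d - (T - H) ^ d) + ENNReal.ofReal (T ^ d - (T - H) ^ d) :=
        add_le_add h1 h2
    _ = ENNReal.ofReal (2 * (T ^ d - (T - H) ^ d)) := by
        have hnn : (0:ℝ) ≤ T ^ d - (T - H) ^ d := by linarith [hPge.trans hPle]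
        rw [two_mul, ENNReal.ofReal_add hnn hnn]
end

section
/- Let ψ: ℝ^d → ℂ be an additive character ψ(t) = e^{i a·t}, T > 0, H ∈ (0,T], x₀ ∈ X, f: X → ℂ bounded measurable, and u: ℝ^d → G a group homomorphism into a group acting on X on the right. Define μ_{T,ψ}(f) = (1/T^d)∫_{[0,T]^d} ψ(t)(f(x₀u(t)) − c) dt where c is a constant, and (f∗σ_H)(x) = (1/H^d)∫_{[0,H]^d} \overline{ψ(s)} f(x·u(s)^{-1}) ds. Then |μ_{T,ψ}(f) − μ_{T,ψ}(f∗σ_H)| ≤ (2‖f − c‖_∞ / (T^d H^d)) ∫_{[0,H]^d} |[0,T]^d △ ([0,T]^d − s)| ds ≤ C·(H/T)·‖f − c‖_∞ for a constant C depending only on d. -/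
/-!
Write `g t = ψ t (f (x₀ u(t)) - c)`. Since `ψ(t) conj ψ(s) = ψ(t - s)` and
`u(t) u(s)⁻¹ = u(t - s)`, the quantity `μ_{T,ψ}(f∗σ_H)` is the average over `s ∈ [0,H]^d` of the
averages of `g (· - s)` over `[0,T]^d`, that is, of `g` over the translated cube `[0,T]^d - s`.
Each of these differs from `μ_{T,ψ}(f)` by at most `‖g‖_∞ |[0,T]^d △ ([0,T]^d - s)| / T^d`, and
for `0 ≤ s ≤ H` the symmetric difference has volume `2 (T^d - ∏ (T - s_i)) ≤ 2 d T^{d-1} H` by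
the Weierstrass product inequality.
-/

open MeasureTheory Set
open scoped symmDiff ComplexConjugate

section SetIntegral

variable {α E : Type*} [MeasurableSpace α] {μ : Measure α}
  [NormedAddCommGroup E] [NormedSpace ℝ E]

theorem norm_setIntegral_sub_setIntegral_le {A B : Set α} {g : α → E} {M : ℝ}
    (hA : MeasurableSet A) (hB : MeasurableSet B) (hAμ : μ A ≠ ⊤) (hBμ : μ B ≠ ⊤)
    (hg : AEStronglyMeasurable g μ) (hgM : ∀ x, ‖g x‖ ≤ M) :
    ‖∫ x in A, g x ∂μ - ∫ x in B, g x ∂μ‖ ≤ M * μ.real (A ∆ B) := by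
  have hint : ∀ S, μ S ≠ ⊤ → IntegrableOn g S μ := fun S hS =>
    Measure.integrableOn_of_bounded hS hg (ae_of_all _ hgM)
  rw [← integral_inter_add_sdiff hB (hint A hAμ), ← integral_inter_add_sdiff hA (hint B hBμ),
    inter_comm B A, add_sub_add_left_eq_sub, measureReal_symmDiff_eq hA hB, mul_add]
  calc _ ≤ ‖∫ x in A \ B, g x ∂μ‖ + ‖∫ x in B \ A, g x ∂μ‖ := norm_sub_le _ _
    _ ≤ _ := add_le_add
      (norm_setIntegral_le_of_norm_le_const ((measure_mono sdiff_subset).trans_lt hAμ.lt_top)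
        fun x _ => hgM x)
      (norm_setIntegral_le_of_norm_le_const ((measure_mono sdiff_subset).trans_lt hBμ.lt_top)
        fun x _ => hgM x)

theorem measureReal_symmDiff_eq_add_sub_inter {A B : Set α} (hA : MeasurableSet A)
    (hB : MeasurableSet B) (hAμ : μ A ≠ ⊤) (hBμ : μ B ≠ ⊤) :
    μ.real (A ∆ B) = μ.real A + μ.real B - 2 * μ.real (A ∩ B) := by
  have hAB := measureReal_inter_add_sdiff (μ := μ) (s := A) hB hAμ
  have hBA := measureReal_inter_add_sdiff (μ := μ) (s := B) hA hBμ
  rw [inter_comm] at hBA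
  rw [measureReal_symmDiff_eq hA hB]
  linarith

end SetIntegral

section Translate

variable {G E : Type*} [AddGroup G] [MeasurableSpace G] [MeasurableAdd₂ G]
  {μ : Measure G} [SFinite μ] {A B : Set G}

theorem measurable_measure_symmDiff_image_sub (hA : MeasurableSet A) :
    Measurable fun s => μ (A ∆ ((· - s) '' A)) := by
  simp_rw [image_sub_right]
  exact measurable_measure_prodMk_left
    ((measurable_snd hA).symmDiff ((measurable_snd.add measurable_fst) hA))

variable [μ.IsAddRightInvariant]

theorem integrableOn_measureReal_symmDiff_image_sub (hA : MeasurableSet A) (hAμ : μ A ≠ ⊤)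
    (hBμ : μ B ≠ ⊤) :
    IntegrableOn (fun s => μ.real (A ∆ ((· - s) '' A))) B μ := by
  refine Measure.integrableOn_of_bounded (M := 2 * μ.real A) hBμ
    (measurable_measure_symmDiff_image_sub hA).ennreal_toReal.aestronglyMeasurable
    (ae_of_all _ fun s => ?_)
  have hmeas : μ ((· - s) '' A) = μ A := by
    rw [image_sub_right, measure_preimage_add_right]
  rw [Real.norm_of_nonneg measureReal_nonneg, two_mul]
  calc μ.real (A ∆ ((· - s) '' A)) ≤ μ.real (A ∪ (· - s) '' A) :=
        measureReal_mono symmDiff_subset_union (measure_union_ne_top hAμ (hmeas ▸ hAμ))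
    _ ≤ μ.real A + μ.real ((· - s) '' A) := measureReal_union_le _ _
    _ = μ.real A + μ.real A := by simp only [Measure.real, hmeas]

variable [MeasurableNeg G] [NormedAddCommGroup E] [NormedSpace ℝ E] [CompleteSpace E]

theorem norm_measureReal_smul_setIntegral_sub_setIntegral_le {g : G → E} {M : ℝ}
    (hA : MeasurableSet A) (hAμ : μ A ≠ ⊤) (hBμ : μ B ≠ ⊤) (hg : StronglyMeasurable g)
    (hgM : ∀ x, ‖g x‖ ≤ M) :
    ‖μ.real B • ∫ t in A, g t ∂μ - ∫ t in A, ∫ s in B, g (t - s) ∂μ ∂μ‖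
      ≤ M * ∫ s in B, μ.real (A ∆ ((· - s) '' A)) ∂μ := by
  have := isFiniteMeasure_restrict.2 hAμ
  have := isFiniteMeasure_restrict.2 hBμ
  have hprod : Integrable (Function.uncurry fun t s => g (t - s))
      ((μ.restrict A).prod (μ.restrict B)) :=
    Integrable.of_bound (hg.comp_measurable measurable_sub).aestronglyMeasurable M
      (ae_of_all _ fun _ => hgM _)
  have htranslate : ∀ s, ∫ t in A, g (t - s) ∂μ = ∫ t in (· - s) '' A, g t ∂μ := fun s =>
    ((measurePreserving_sub_right μ s).setIntegral_image_emb
      (measurableEmbedding_subRight s) g A).symm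
  have hinner : Integrable (fun s => ∫ t in A, g (t - s) ∂μ) (μ.restrict B) :=
    hprod.integral_prod_right
  rw [integral_integral_swap hprod, ← setIntegral_const,
    ← integral_sub (integrable_const _) hinner, ← integral_const_mul]
  refine norm_integral_le_of_norm_le
    ((integrableOn_measureReal_symmDiff_image_sub hA hAμ hBμ).const_mul M)
    (ae_of_all _ fun s => ?_)
  rw [htranslate]
  exact norm_setIntegral_sub_setIntegral_le hA
    (measurableEmbedding_subRight s |>.measurableSet_image' hA) hAμ
    (by rwa [image_sub_right, measure_preimage_add_right])
    hg.aestronglyMeasurable hgM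

theorem norm_setAverage_sub_setAverage_setAverage_le {g : G → E} {M : ℝ}
    (hA : MeasurableSet A) (hAμ : μ A ≠ ⊤) (hB : μ.real B ≠ 0) (hg : StronglyMeasurable g)
    (hgM : ∀ x, ‖g x‖ ≤ M) :
    ‖⨍ t in A, g t ∂μ - ⨍ t in A, ⨍ s in B, g (t - s) ∂μ ∂μ‖
      ≤ M / (μ.real A * μ.real B) * ∫ s in B, μ.real (A ∆ ((· - s) '' A)) ∂μ := by
  have hrescale : ⨍ t in A, g t ∂μ - ⨍ t in A, ⨍ s in B, g (t - s) ∂μ ∂μ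
      = (μ.real A * μ.real B)⁻¹ •
        (μ.real B • ∫ t in A, g t ∂μ - ∫ t in A, ∫ s in B, g (t - s) ∂μ ∂μ) := by
    simp only [setAverage_eq, integral_smul]
    rw [smul_sub, mul_inv, mul_smul, mul_smul, smul_smul (μ.real B)⁻¹, inv_mul_cancel₀ hB,
      one_smul]
  rw [hrescale, norm_smul, Real.norm_of_nonneg (by positivity), div_mul_eq_mul_div,
    div_eq_inv_mul]
  gcongr
  exact norm_measureReal_smul_setIntegral_sub_setIntegral_le hA hAμ
    (ENNReal.toReal_ne_zero.1 hB).2 hg hgM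

end Translate

theorem Icc_inter_image_sub_Icc {α : Type*} [AddCommGroup α] [Lattice α] [IsOrderedAddMonoid α]
    {a b s : α} (hs : 0 ≤ s) :
    Icc a b ∩ (· - s) '' Icc a b = Icc a (b - s) := by
  rw [image_sub_const_Icc, Icc_inter_Icc, sup_eq_left.2 (sub_le_self a hs),
    inf_eq_right.2 (sub_le_self b hs)]

theorem one_sub_prod_one_sub_le_sum {ι R : Type*} [CommRing R] [LinearOrder R]
    [IsStrictOrderedRing R] (s : Finset ι) {y : ι → R} (h0 : ∀ i ∈ s, 0 ≤ y i)
    (h1 : ∀ i ∈ s, y i ≤ 1) :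
    1 - ∏ i ∈ s, (1 - y i) ≤ ∑ i ∈ s, y i := by
  induction s using Finset.cons_induction with
  | empty => simp
  | cons a s ha ih =>
    rw [Finset.forall_mem_cons] at h0 h1
    have hP : ∏ i ∈ s, (1 - y i) ≤ 1 := Finset.prod_le_one
      (fun i hi => sub_nonneg.2 (h1.2 i hi)) fun i hi => sub_le_self _ (h0.2 i hi)
    rw [Finset.prod_cons, Finset.sum_cons]
    linarith [ih h0.2 h1.2, mul_le_of_le_one_right h0.1 hP]

section Cube

variable {ι : Type*} [Fintype ι] {T H : ℝ}

theorem volume_real_Icc_zero_const (hT : 0 ≤ T) :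
    volume.real (Icc (0 : ι → ℝ) fun _ => T) = T ^ Fintype.card ι := by
  rw [measureReal_def,
    Real.volume_Icc_pi_toReal (show (0 : ι → ℝ) ≤ fun _ => T from fun _ => hT)]
  simp

theorem volume_real_symmDiff_Icc_image_sub {s : ι → ℝ} (hs0 : 0 ≤ s)
    (hsT : s ≤ fun _ => T) :
    volume.real ((Icc 0 fun _ => T) ∆ ((· - s) '' Icc 0 fun _ => T))
      = 2 * (T ^ Fintype.card ι - ∏ i, (T - s i)) := by
  have hs0T : 0 ≤ (fun _ => T) - s := sub_nonneg.2 hsT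
  rw [measureReal_symmDiff_eq_add_sub_inter measurableSet_Icc
    ((measurableEmbedding_subRight s).measurableSet_image' measurableSet_Icc)
    isCompact_Icc.measure_lt_top.ne
    (by rw [image_sub_const_Icc]; exact isCompact_Icc.measure_lt_top.ne),
    Icc_inter_image_sub_Icc hs0, image_sub_const_Icc, measureReal_def, measureReal_def,
    measureReal_def, Real.volume_Icc_pi_toReal hs0T,
    Real.volume_Icc_pi_toReal (sub_le_sub_right (hs0.trans hsT) s),
    Real.volume_Icc_pi_toReal (hs0.trans hsT)]
  simp only [Pi.zero_apply, sub_zero, Finset.prod_const, Finset.card_univ, Pi.sub_apply,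
    zero_sub, sub_neg_eq_add, sub_add_cancel]
  ring

theorem volume_real_symmDiff_Icc_image_sub_le (hT : 0 < T) (hHT : H ≤ T) {s : ι → ℝ}
    (hs0 : 0 ≤ s) (hsH : s ≤ fun _ => H) :
    volume.real ((Icc 0 fun _ => T) ∆ ((· - s) '' Icc 0 fun _ => T))
      ≤ 2 * Fintype.card ι * (H / T) * T ^ Fintype.card ι := by
  have hsT : s ≤ fun _ => T := hsH.trans fun _ => hHT
  have hprod : ∏ i, (T - s i) = T ^ Fintype.card ι * ∏ i, (1 - s i / T) := by
    rw [← Finset.card_univ, ← Finset.prod_const, ← Finset.prod_mul_distrib]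
    exact Finset.prod_congr rfl fun i _ => by field_simp
  have hsum : ∑ i, s i / T ≤ Fintype.card ι * (H / T) := by
    simpa using Finset.sum_le_sum fun i (_ : i ∈ Finset.univ) =>
      div_le_div_of_nonneg_right (hsH i) hT.le
  have hweierstrass := one_sub_prod_one_sub_le_sum Finset.univ
    (fun i _ => div_nonneg (hs0 i) hT.le) fun i _ => (div_le_one hT).2 (hsT i)
  rw [volume_real_symmDiff_Icc_image_sub hs0 hsT, hprod]
  have hTn : 0 ≤ T ^ Fintype.card ι := by positivity
  nlinarith [mul_le_mul_of_nonneg_left (hweierstrass.trans hsum) hTn]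

theorem setIntegral_volume_real_symmDiff_Icc_image_sub_le (hT : 0 < T) (hH : 0 ≤ H)
    (hHT : H ≤ T) :
    ∫ s in Icc (0 : ι → ℝ) fun _ => H,
        volume.real ((Icc 0 fun _ => T) ∆ ((· - s) '' Icc 0 fun _ => T))
      ≤ H ^ Fintype.card ι * (2 * Fintype.card ι * (H / T) * T ^ Fintype.card ι) := by
  calc _ ≤ ∫ _ in Icc (0 : ι → ℝ) fun _ => H,
        2 * Fintype.card ι * (H / T) * T ^ Fintype.card ι :=
        setIntegral_mono_on (integrableOn_measureReal_symmDiff_image_sub measurableSet_Icc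
            isCompact_Icc.measure_lt_top.ne isCompact_Icc.measure_lt_top.ne)
          (integrableOn_const isCompact_Icc.measure_lt_top.ne) measurableSet_Icc
          fun s hs => volume_real_symmDiff_Icc_image_sub_le hT hHT hs.1 hs.2
    _ = _ := by rw [setIntegral_const, volume_real_Icc_zero_const hH, smul_eq_mul]

end Cube

theorem exp_I_mul_sum_mul_conj {ι : Type*} [Fintype ι] (a t s : ι → ℝ) :
    Complex.exp (Complex.I * ↑(∑ i, a i * t i))
        * conj (Complex.exp (Complex.I * ↑(∑ i, a i * s i)))
      = Complex.exp (Complex.I * ↑(∑ i, a i * (t - s) i)) := by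
  simp only [Pi.sub_apply, mul_sub, Finset.sum_sub_distrib]
  rw [← Complex.exp_conj, map_mul, Complex.conj_I, Complex.conj_ofReal, ← Complex.exp_add]
  push_cast
  ring_nf

theorem act_act_inv_eq_act_sub {V G X : Type*} [AddGroup V] [Group G] {u : V → G}
    (hu : ∀ s t, u (s + t) = u s * u t) {ρ : X → G → X}
    (hρ : ∀ x g h, ρ x (g * h) = ρ (ρ x g) h) (x : X) (t s : V) :
    ρ (ρ x (u t)) (u s)⁻¹ = ρ x (u (t - s)) := by
  rw [← hρ, ← mul_inv_cancel_right (u (t - s)) (u s), ← hu, sub_add_cancel]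

theorem mul_integral_conj_sub_eq_integral {V : Type*} [AddGroup V] [MeasurableSpace V]
    [MeasurableSub V] {ν : Measure V} [IsFiniteMeasure ν] {ψ F : V → ℂ} {c : ℂ} {M : ℝ}
    (hψ : ∀ t s, ψ t * conj (ψ s) = ψ (t - s)) (hψm : Measurable ψ) (hψ₁ : ∀ s, ‖ψ s‖ = 1)
    (hFm : Measurable F) (hFM : ∀ x, ‖F x - c‖ ≤ M) (t : V) :
    ψ t * ((∫ s, conj (ψ s) * F (t - s) ∂ν) - (∫ s, conj (ψ s) ∂ν) * c)
      = ∫ s, ψ (t - s) * (F (t - s) - c) ∂ν := by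
  have hconjm : Measurable fun s => conj (ψ s) := Complex.continuous_conj.measurable.comp hψm
  have hconj₁ : ∀ s, ‖conj (ψ s)‖ = 1 := fun s => (RCLike.norm_conj _).trans (hψ₁ s)
  have hF : Integrable (fun s => conj (ψ s) * F (t - s)) ν :=
    Integrable.of_bound (hconjm.mul (hFm.comp (measurable_const_sub t))).aestronglyMeasurable
      (M + ‖c‖) (ae_of_all _ fun s => by
        rw [norm_mul, hconj₁, one_mul, ← sub_add_cancel (F (t - s)) c]
        exact (norm_add_le _ _).trans (add_le_add_left (hFM _) _))
  have hψν : Integrable (fun s => conj (ψ s)) ν :=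
    Integrable.of_bound hconjm.aestronglyMeasurable 1 (ae_of_all _ fun s => (hconj₁ s).le)
  rw [← integral_mul_const, ← integral_sub hF (hψν.mul_const c), ← integral_const_mul]
  congr with s
  rw [← hψ]
  ring

/-- Comparing `μ_{T,ψ}(f)` with `μ_{T,ψ}(f∗σ_H)`: the difference is bounded by
`(2‖f-c‖_∞/(T^d H^d)) ∫_{[0,H]^d} |[0,T]^d ∆ ([0,T]^d - s)| ds ≤ C (H/T) ‖f-c‖_∞`,
with `C` depending only on `d`. -/
theorem mu_convolution_comparison (d : ℕ) (hd : 1 ≤ d) :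
    ∃ C : ℝ, 0 < C ∧
    ∀ {G X : Type} [Group G] (a : Fin d → ℝ) (T H : ℝ), 0 < T → 0 < H → H ≤ T →
    ∀ (u : (Fin d → ℝ) → G), (∀ s t, u (s + t) = u s * u t) →
    ∀ (ρ : X → G → X), (∀ x g h, ρ x (g * h) = ρ (ρ x g) h) →
    ∀ (x₀ : X) (f : X → ℂ) (c : ℂ) (M : ℝ), 0 ≤ M →
    (∀ x, ‖f x - c‖ ≤ M) →
    Measurable (fun t : Fin d → ℝ => f (ρ x₀ (u t))) →
    -- the character, the cubes, `μ_{T,ψ}`, the convolution `f∗σ_H`, and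
    -- `μ_{T,ψ}(f∗σ_H)` (whose subtracted constant is the convolution of `c`):
    (let ψ : (Fin d → ℝ) → ℂ := fun t => Complex.exp (Complex.I * ∑ i, a i * t i)
     let cube : ℝ → Set (Fin d → ℝ) := fun S => {t | ∀ i, t i ∈ Icc 0 S}
     let μT : ℂ := (T ^ d)⁻¹ • ∫ t in cube T, ψ t * (f (ρ x₀ (u t)) - c)
     let conv : X → ℂ := fun x =>
       (H ^ d)⁻¹ • ∫ s in cube H, (starRingEnd ℂ) (ψ s) * f (ρ x (u s)⁻¹)
     let cH : ℂ := (H ^ d)⁻¹ • (∫ s in cube H, (starRingEnd ℂ) (ψ s)) * c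
     let μTconv : ℂ := (T ^ d)⁻¹ • ∫ t in cube T, ψ t * (conv (ρ x₀ (u t)) - cH)
     ‖μT - μTconv‖ ≤ (2 * M / (T ^ d * H ^ d)) *
         ∫ s in cube H,
           (volume (symmDiff (cube T) ((fun t => t - s) '' cube T))).toReal ∧
       ‖μT - μTconv‖ ≤ C * (H / T) * M) := by
  have hd' : (0 : ℝ) < d := Nat.cast_pos.2 hd
  refine ⟨2 * d, by positivity, ?_⟩
  intro G X _ a T H hT hH hHT u hu ρ hρ x₀ f c M hM hfM hfm ψ cube μT conv cH μTconv
  have hcube : ∀ S, cube S = Icc 0 fun _ => S := fun S => by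
    ext t
    simp [cube, Pi.le_def, forall_and]
  have hvol : ∀ {S}, 0 < S → volume.real (cube S) = S ^ d := fun hS => by
    rw [hcube, volume_real_Icc_zero_const hS.le, Fintype.card_fin]
  have hfinite : ∀ S, volume (cube S) ≠ ⊤ := fun S => hcube S ▸ isCompact_Icc.measure_lt_top.ne
  have hψm : Measurable ψ := by fun_prop
  have hψ₁ : ∀ t, ‖ψ t‖ = 1 := fun t => Complex.norm_exp_I_mul_ofReal _
  set g : (Fin d → ℝ) → ℂ := fun t => ψ t * (f (ρ x₀ (u t)) - c)
  have hconv : ∀ t, ψ t * (conv (ρ x₀ (u t)) - cH) = ⨍ s in cube H, g (t - s) := fun t => by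
    have := isFiniteMeasure_restrict.2 (hfinite H)
    simp only [conv, cH, act_act_inv_eq_act_sub hu hρ, setAverage_eq, hvol hH, smul_mul_assoc,
      ← smul_sub, mul_smul_comm]
    rw [mul_integral_conj_sub_eq_integral (fun t s => exp_I_mul_sum_mul_conj a t s) hψm hψ₁ hfm
      fun _ => hfM _]
  have hμ : μT - μTconv = (⨍ t in cube T, g t) - ⨍ t in cube T, ⨍ s in cube H, g (t - s) := by
    simp only [μT, μTconv, hconv, setAverage_eq, hvol hT, g]
  have hdiff := norm_setAverage_sub_setAverage_setAverage_le (g := g)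
    (hcube T ▸ measurableSet_Icc) (hfinite T) (by rw [hvol hH]; positivity)
    (hψm.mul (hfm.sub measurable_const)).stronglyMeasurable fun t => by simpa [g, hψ₁] using hfM _
  have hI := setIntegral_volume_real_symmDiff_Icc_image_sub_le (ι := Fin d) hT hH.le hHT
  rw [Fintype.card_fin, ← hcube, ← hcube] at hI
  rw [← hμ, hvol hT, hvol hH] at hdiff
  simp only [← measureReal_def]
  refine ⟨hdiff.trans ?_, hdiff.trans ?_⟩
  · gcongr
    linarith
  · calc M / (T ^ d * H ^ d) * _
        ≤ M / (T ^ d * H ^ d) * (H ^ d * (2 * d * (H / T) * T ^ d)) := by gcongr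
      _ = 2 * d * (H / T) * M := by field_simp
end

section
/- Fix d ≥ 1, K₁,...,K_d ≥ 1, T ≥ max_i K_i, and 0 < δ < (min_i K_i)/2. For a bounded function F: ℝ^d → ℂ, the difference between ∫_{[0,T]^d} (∑_{k∈ℤ^d} g_δ(t − Kk)) F(t) dt and ∑_{k∈ℤ^d, Kk∈[0,T]^d} ∫_{ℝ^d} g_δ(t − Kk) F(t) dt is bounded in absolute value by C·‖F‖_∞·T^{d-1}·(max_i K_i)/(K₁⋯K_d), where C depends only on d. -/
/-!
Only lattice points `Kk` within `δ` of the boundary of `[0,T]^d` contribute to the difference: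
if `Kk` is farther inside, the hat `g_δ(· - Kk)` is supported in the box and the two integrals
agree; if it is farther outside, both vanish. Each boundary point contributes at most
`2 · 2^d ‖F‖_∞`, as `∫ g_δ ≤ 2^d`. Near a face orthogonal to `e_i` the coordinate `k_i` has at
most two values (because `2δ < K_i`), and each other `k_j` at most `3T/K_j`, so there are at
most `2d (3T)^(d-1) (max_i K_i) / ∏_i K_i` boundary points.
-/

open MeasureTheory Set
open scoped Finset

noncomputable section

def hat (δ c x : ℝ) : ℝ := max (δ⁻¹ ^ 2 * (δ - |x - c|)) 0

section Hat

variable {δ c x : ℝ}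

lemma hat_nonneg : 0 ≤ hat δ c x := le_max_right _ _

lemma mem_Ioo_of_hat_ne_zero (h : hat δ c x ≠ 0) : x ∈ Ioo (c - δ) (c + δ) := by
  by_contra hx
  refine h (max_eq_right (mul_nonpos_of_nonneg_of_nonpos (by positivity) (sub_nonpos.2 ?_)))
  by_contra hlt
  obtain ⟨h₁, h₂⟩ := abs_sub_lt_iff.1 (not_le.1 hlt)
  exact hx ⟨by linarith, by linarith⟩

lemma hat_le_indicator (hδ : 0 < δ) :
    hat δ c x ≤ (Icc (c - δ) (c + δ)).indicator (fun _ => δ⁻¹) x := by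
  by_cases hx : hat δ c x = 0
  · rw [hx]; exact indicator_nonneg (fun _ _ => by positivity) x
  rw [indicator_of_mem (Ioo_subset_Icc_self (mem_Ioo_of_hat_ne_zero hx))]
  refine max_le ?_ (by positivity)
  calc δ⁻¹ ^ 2 * (δ - |x - c|) ≤ δ⁻¹ ^ 2 * δ := by gcongr; linarith [abs_nonneg (x - c)]
    _ = δ⁻¹ := by field_simp

lemma integrable_hat : Integrable (hat δ c) := by
  refine Continuous.integrable_of_hasCompactSupport (by unfold hat; fun_prop) ?_
  refine HasCompactSupport.intro (isCompact_Icc (a := c - δ) (b := c + δ)) fun x hx => ?_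
  by_contra h
  exact hx (Ioo_subset_Icc_self (mem_Ioo_of_hat_ne_zero h))

lemma integral_hat_le_two (hδ : 0 < δ) : ∫ x, hat δ c x ≤ 2 := by
  calc ∫ x, hat δ c x ≤ ∫ x, (Icc (c - δ) (c + δ)).indicator (fun _ => δ⁻¹) x :=
        integral_mono integrable_hat
          ((integrable_indicator_iff measurableSet_Icc).2 (integrableOn_const (by simp)))
          fun x => hat_le_indicator hδ
    _ = 2 := by
        rw [integral_indicator_const _ measurableSet_Icc, measureReal_def, Real.volume_Icc,
          ENNReal.toReal_ofReal (by linarith), smul_eq_mul]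
        field_simp
        ring

end Hat

/-- `hatPi δ c t` is the paper's `g_δ(t - c)`. -/
def hatPi {ι : Type*} [Fintype ι] (δ : ℝ) (c t : ι → ℝ) : ℝ := ∏ i, hat δ (c i) (t i)

section HatPi

variable {ι : Type*} [Fintype ι] {δ : ℝ} {c t : ι → ℝ}

lemma hatPi_nonneg : 0 ≤ hatPi δ c t := Finset.prod_nonneg fun _ _ => hat_nonneg

lemma mem_Ioo_of_hatPi_ne_zero (h : hatPi δ c t ≠ 0) (i : ι) :
    t i ∈ Ioo (c i - δ) (c i + δ) :=
  mem_Ioo_of_hat_ne_zero (Finset.prod_ne_zero_iff.1 h i (Finset.mem_univ i))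

lemma integrable_hatPi : Integrable (hatPi δ c) :=
  Integrable.fintype_prod (f := fun i => hat δ (c i)) fun _ => integrable_hat

lemma integral_hatPi_le (hδ : 0 < δ) : ∫ t, hatPi δ c t ≤ 2 ^ Fintype.card ι := by
  simp_rw [hatPi]
  rw [integral_fintype_prod_volume_eq_prod (fun i => hat δ (c i))]
  calc ∏ i, ∫ x, hat δ (c i) x ≤ ∏ _i : ι, (2 : ℝ) :=
        Finset.prod_le_prod (fun _ _ => integral_nonneg fun _ => hat_nonneg)
          fun _ _ => integral_hat_le_two hδ
    _ = 2 ^ Fintype.card ι := by simp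

variable {F : (ι → ℝ) → ℂ} {M : ℝ}

lemma integrable_hatPi_mul (hF : AEStronglyMeasurable F) (hFM : ∀ t, ‖F t‖ ≤ M) :
    Integrable fun t => (hatPi δ c t : ℂ) * F t := by
  refine ((integrable_hatPi (δ := δ) (c := c)).ofReal.bdd_mul hF (ae_of_all _ hFM)).congr ?_
  exact ae_of_all _ fun t => mul_comm _ _

lemma norm_setIntegral_hatPi_mul_le (hδ : 0 < δ) (hM : 0 ≤ M) (hFM : ∀ t, ‖F t‖ ≤ M)
    (s : Set (ι → ℝ)) :
    ‖∫ t in s, (hatPi δ c t : ℂ) * F t‖ ≤ 2 ^ Fintype.card ι * M := by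
  have hint : Integrable fun t => hatPi δ c t * M :=
    (integrable_hatPi (δ := δ) (c := c)).mul_const M
  calc ‖∫ t in s, (hatPi δ c t : ℂ) * F t‖ ≤ ∫ t in s, hatPi δ c t * M :=
        norm_integral_le_of_norm_le hint.integrableOn <| ae_of_all _ fun t => by
          rw [norm_mul, Complex.norm_real, Real.norm_of_nonneg hatPi_nonneg]
          exact mul_le_mul_of_nonneg_left (hFM t) hatPi_nonneg
    _ ≤ ∫ t, hatPi δ c t * M :=
        setIntegral_le_integral hint (ae_of_all _ fun _ => mul_nonneg hatPi_nonneg hM)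
    _ ≤ 2 ^ Fintype.card ι * M := by
        rw [integral_mul_const]; exact mul_le_mul_of_nonneg_right (integral_hatPi_le hδ) hM

lemma setIntegral_hatPi_mul_eq_integral {c : ι → ℝ} {a b : ℝ}
    (hc : ∀ i, c i ∈ Icc (a + δ) (b - δ)) :
    ∫ t in {t | ∀ i, t i ∈ Icc a b}, (hatPi δ c t : ℂ) * F t =
      ∫ t, (hatPi δ c t : ℂ) * F t := by
  refine setIntegral_eq_integral_of_forall_compl_eq_zero fun t ht => ?_
  suffices hatPi δ c t = 0 by simp [this]
  by_contra h
  refine ht fun i => ?_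
  have := mem_Ioo_of_hatPi_ne_zero h i
  constructor <;> linarith [this.1, this.2, (hc i).1, (hc i).2]

end HatPi

lemma Finset.card_filter_exists_piFinset_le {ι α : Type*} [Fintype ι] [DecidableEq ι]
    [DecidableEq α] (s : ι → Finset α) (p : ι → α → Prop) [∀ i, DecidablePred (p i)] :
    #((Fintype.piFinset s).filter fun k => ∃ i, p i (k i)) ≤
      ∑ i, #((s i).filter (p i)) * ∏ j ∈ Finset.univ.erase i, #(s j) := by
  calc _ ≤ #(Finset.univ.biUnion fun i =>
        Fintype.piFinset (Function.update s i ((s i).filter (p i)))) := by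
        refine Finset.card_le_card fun k hk => ?_
        obtain ⟨hks, i, hi⟩ := Finset.mem_filter.1 hk
        rw [Fintype.mem_piFinset] at hks
        refine Finset.mem_biUnion.2 ⟨i, Finset.mem_univ i, Fintype.mem_piFinset.2 fun j => ?_⟩
        rcases eq_or_ne j i with rfl | hj
        · simpa using ⟨hks j, hi⟩
        · simpa [hj] using hks j
    _ ≤ _ := Finset.card_biUnion_le.trans <| Finset.sum_le_sum fun i _ => by
        rw [Fintype.card_piFinset]
        simp only [Function.apply_update (fun _ s => Finset.card s)]
        rw [Finset.prod_update_of_mem (Finset.mem_univ i), ← Finset.erase_eq]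

def latticeIcc (K a b : ℝ) : Finset ℤ := Finset.Icc ⌈a / K⌉ ⌊b / K⌋

section LatticeIcc

variable {K a b : ℝ}

lemma mem_latticeIcc (hK : 0 < K) {n : ℤ} : n ∈ latticeIcc K a b ↔ a ≤ K * n ∧ K * n ≤ b := by
  rw [latticeIcc, Finset.mem_Icc, Int.ceil_le, Int.le_floor, div_le_iff₀ hK, le_div_iff₀ hK,
    mul_comm (n : ℝ)]

lemma card_latticeIcc_le (hK : 0 < K) (hab : a ≤ b) :
    (#(latticeIcc K a b) : ℝ) ≤ (b - a) / K + 1 := by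
  have hcard : (#(latticeIcc K a b) : ℝ) = max ((⌊b / K⌋ + 1 - ⌈a / K⌉ : ℤ) : ℝ) 0 := by
    rw [latticeIcc, Int.card_Icc]; exact_mod_cast Int.toNat_eq_max _
  rw [hcard]
  refine max_le ?_ (by have := div_nonneg (sub_nonneg.2 hab) hK.le; linarith)
  push_cast
  have := Int.floor_le (b / K)
  have := Int.le_ceil (a / K)
  rw [sub_div]
  linarith

lemma card_latticeIcc_le_one (hK : 0 < K) (hab : a ≤ b) (hba : b - a < K) :
    #(latticeIcc K a b) ≤ 1 := by
  have hlt : (b - a) / K < 1 := (div_lt_one hK).2 hba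
  have : (#(latticeIcc K a b) : ℝ) < 2 := by linarith [card_latticeIcc_le hK hab]
  exact Nat.lt_succ_iff.1 (by exact_mod_cast this)

end LatticeIcc

section BoxLattice

variable {ι : Type*} [Fintype ι] [DecidableEq ι] (K : ι → ℝ) (T δ : ℝ)

def nearBoxLattice : Finset (ι → ℤ) :=
  Fintype.piFinset fun i => latticeIcc (K i) (-δ) (T + δ)

def boundaryLattice : Finset (ι → ℤ) :=
  (nearBoxLattice K T δ).filter fun k => ∃ i, K i * k i < δ ∨ T - δ < K i * k i

variable {K T δ}

lemma card_filter_near_ends_latticeIcc_le {K : ℝ} (hK : 0 < K) (hδ : 0 < δ) (hδK : δ < K / 2) :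
    #((latticeIcc K (-δ) (T + δ)).filter fun n : ℤ => K * n < δ ∨ T - δ < K * n) ≤ 2 := by
  have hsub : (latticeIcc K (-δ) (T + δ)).filter (fun n : ℤ => K * n < δ ∨ T - δ < K * n) ⊆
      latticeIcc K (-δ) δ ∪ latticeIcc K (T - δ) (T + δ) := by
    intro n hn
    obtain ⟨hn, hnear⟩ := Finset.mem_filter.1 hn
    rw [mem_latticeIcc hK] at hn
    rw [Finset.mem_union, mem_latticeIcc hK, mem_latticeIcc hK]
    rcases hnear with h | h
    · exact Or.inl ⟨hn.1, h.le⟩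
    · exact Or.inr ⟨h.le, hn.2⟩
  calc _ ≤ #(latticeIcc K (-δ) δ) + #(latticeIcc K (T - δ) (T + δ)) :=
        (Finset.card_le_card hsub).trans (Finset.card_union_le _ _)
    _ ≤ 1 + 1 := by
        gcongr <;> exact card_latticeIcc_le_one hK (by linarith) (by linarith)

lemma card_latticeIcc_le_three_mul_div {K : ℝ} (hK : 0 < K) (hKT : K ≤ T) (hδ : 0 < δ)
    (hδK : δ < K / 2) : (#(latticeIcc K (-δ) (T + δ)) : ℝ) ≤ 3 * T / K := by
  refine (card_latticeIcc_le hK (by linarith)).trans ?_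
  rw [div_add_one hK.ne', div_le_div_iff_of_pos_right hK]
  linarith

lemma card_boundaryLattice_le (hK : ∀ i, 1 ≤ K i) (hKT : ∀ i, K i ≤ T) (hδ : 0 < δ)
    (hδK : ∀ i, δ < K i / 2) :
    (#(boundaryLattice K T δ) : ℝ) ≤
      2 * Fintype.card ι * (3 * T) ^ (Fintype.card ι - 1) * (⨆ i, K i) / ∏ i, K i := by
  have hK₀ i : 0 < K i := one_pos.trans_le (hK i)
  have hprodK : 0 < ∏ j, K j := Finset.prod_pos fun j _ => hK₀ j
  have hcount := Finset.card_filter_exists_piFinset_le (fun i => latticeIcc (K i) (-δ) (T + δ))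
    fun i (n : ℤ) => K i * n < δ ∨ T - δ < K i * n
  have hprod i : ∏ j ∈ Finset.univ.erase i, 3 * T / K j =
      (3 * T) ^ (Fintype.card ι - 1) * K i / ∏ j, K j := by
    rw [Finset.prod_div_distrib, Finset.prod_const, Finset.card_erase_of_mem (Finset.mem_univ i),
      Finset.card_univ, ← Finset.prod_erase_mul _ _ (Finset.mem_univ i)]
    field_simp [(hK₀ i).ne', hprodK.ne']
  calc (#(boundaryLattice K T δ) : ℝ)
      ≤ ∑ i, 2 * ∏ j ∈ Finset.univ.erase i, 3 * T / K j := by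
        refine (Nat.cast_le.2 hcount).trans ?_
        push_cast
        gcongr with i _ j _
        · exact_mod_cast card_filter_near_ends_latticeIcc_le (hK₀ i) hδ (hδK i)
        · exact card_latticeIcc_le_three_mul_div (hK₀ j) (hKT j) hδ (hδK j)
    _ ≤ ∑ _i : ι, 2 * ((3 * T) ^ (Fintype.card ι - 1) * (⨆ i, K i) / ∏ j, K j) := by
        gcongr with i
        rw [hprod]
        have hT : 0 ≤ T := (hK₀ i).le.trans (hKT i)
        gcongr
        exact le_ciSup (Set.finite_range K).bddAbove i
    _ = _ := by simp only [Finset.sum_const, Finset.card_univ, nsmul_eq_mul]; ring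

end BoxLattice

section Decomposition

variable {ι : Type*} [Fintype ι] [DecidableEq ι] {K : ι → ℝ} {T δ M : ℝ}
  {F : (ι → ℝ) → ℂ}

lemma mem_nearBoxLattice (hK : ∀ i, 0 < K i) {k : ι → ℤ} :
    k ∈ nearBoxLattice K T δ ↔ ∀ i, -δ ≤ K i * k i ∧ K i * k i ≤ T + δ := by
  simp only [nearBoxLattice, Fintype.mem_piFinset, mem_latticeIcc (hK _)]

lemma mem_nearBoxLattice_of_hatPi_ne_zero (hK : ∀ i, 0 < K i) {k : ι → ℤ} {t : ι → ℝ}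
    (ht : ∀ i, t i ∈ Icc 0 T) (h : hatPi δ (fun i => K i * k i) t ≠ 0) :
    k ∈ nearBoxLattice K T δ := by
  refine (mem_nearBoxLattice hK).2 fun i => ?_
  have := mem_Ioo_of_hatPi_ne_zero h i
  constructor <;> linarith [this.1, this.2, (ht i).1, (ht i).2]

lemma setIntegral_tsum_hatPi_mul_eq_sum (hK : ∀ i, 0 < K i) (hF : Measurable F)
    (hFM : ∀ t, ‖F t‖ ≤ M) :
    ∫ t in {t | ∀ i, t i ∈ Icc 0 T},
        ((∑' k : ι → ℤ, hatPi δ (fun i => K i * k i) t : ℝ) : ℂ) * F t =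
      ∑ k ∈ nearBoxLattice K T δ,
        ∫ t in {t | ∀ i, t i ∈ Icc 0 T}, (hatPi δ (fun i => K i * k i) t : ℂ) * F t := by
  rw [← integral_finsetSum _ fun k _ =>
    (integrable_hatPi_mul hF.aestronglyMeasurable hFM).integrableOn]
  refine setIntegral_congr_fun ?_ fun t ht => ?_
  · measurability
  · rw [tsum_eq_sum fun k hk => ?_]
    · push_cast; exact Finset.sum_mul ..
    · by_contra h
      exact hk (mem_nearBoxLattice_of_hatPi_ne_zero hK ht h)

lemma norm_setIntegral_tsum_hatPi_mul_sub_tsum_le (hK : ∀ i, 0 < K i) (hδ : 0 < δ) (hM : 0 ≤ M)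
    (hF : Measurable F) (hFM : ∀ t, ‖F t‖ ≤ M) :
    ‖(∫ t in {t | ∀ i, t i ∈ Icc 0 T},
          ((∑' k : ι → ℤ, hatPi δ (fun i => K i * k i) t : ℝ) : ℂ) * F t) -
        ∑' k : {k : ι → ℤ // ∀ i, (K i * k i : ℝ) ∈ Icc 0 T},
          ∫ t, (hatPi δ (fun i => K i * (k : ι → ℤ) i) t : ℂ) * F t‖ ≤
      #(boundaryLattice K T δ) * (2 * 2 ^ Fintype.card ι * M) := by
  set S : Set (ι → ℤ) := {k | ∀ i, (K i * k i : ℝ) ∈ Icc 0 T}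
  set G : (ι → ℤ) → ℂ := fun k => ∫ t, (hatPi δ (fun i => K i * k i) t : ℂ) * F t
  have hS : ∑' k : {k : ι → ℤ // ∀ i, (K i * k i : ℝ) ∈ Icc 0 T}, G k =
      ∑ k ∈ nearBoxLattice K T δ, S.indicator G k := by
    refine (tsum_subtype S G).trans <|
      tsum_eq_sum fun k hk => indicator_of_notMem (fun hkS => hk ?_) _
    exact (mem_nearBoxLattice hK).2 fun i => ⟨by linarith [(hkS i).1], by linarith [(hkS i).2]⟩
  have hinterior : ∀ k ∈ nearBoxLattice K T δ, k ∉ boundaryLattice K T δ →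
      (∫ t in {t | ∀ i, t i ∈ Icc 0 T}, (hatPi δ (fun i => K i * k i) t : ℂ) * F t) -
        S.indicator G k = 0 := by
    intro k hk hkb
    have hIcc : ∀ i, K i * k i ∈ Icc (0 + δ) (T - δ) := by
      simpa [boundaryLattice, hk] using hkb
    have hkS : k ∈ S := fun i => ⟨by linarith [(hIcc i).1], by linarith [(hIcc i).2]⟩
    rw [indicator_of_mem hkS, setIntegral_hatPi_mul_eq_integral hIcc, sub_self]
  rw [setIntegral_tsum_hatPi_mul_eq_sum hK hF hFM, hS, ← Finset.sum_sub_distrib,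
    ← Finset.sum_subset (Finset.filter_subset _ _) hinterior]
  calc _ ≤ ∑ k ∈ boundaryLattice K T δ, (2 ^ Fintype.card ι * M + 2 ^ Fintype.card ι * M) :=
        (norm_sum_le _ _).trans <| Finset.sum_le_sum fun k _ =>
          (norm_sub_le _ _).trans <| add_le_add (norm_setIntegral_hatPi_mul_le hδ hM hFM _) <|
            (norm_indicator_le_norm_self G k).trans <| by
              simpa using norm_setIntegral_hatPi_mul_le hδ hM hFM univ
    _ = _ := by rw [Finset.sum_const, nsmul_eq_mul]; ring

end Decomposition

end

/-- Replacing the integral of `(∑_k g_δ(t-Kk)) F(t)` over `[0,T]^d` by the sum,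
over lattice points `Kk ∈ [0,T]^d`, of the full integrals of `g_δ(t-Kk) F(t)`
incurs an error `≤ C ‖F‖_∞ T^(d-1) (max_i K_i)/(K₁⋯K_d)`, `C` depending only
on `d`. -/
theorem hat_sum_integral_boundary_error (d : ℕ) (hd : 1 ≤ d) :
    ∃ C : ℝ, 0 < C ∧ ∀ (K : Fin d → ℝ) (T δ M : ℝ), (∀ i, 1 ≤ K i) →
      (∀ i, K i ≤ T) → 0 < δ → (∀ i, δ < K i / 2) → 0 ≤ M →
      ∀ F : (Fin d → ℝ) → ℂ, Measurable F → (∀ t, ‖F t‖ ≤ M) →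
      ‖(∫ t in {t : Fin d → ℝ | ∀ i, t i ∈ Icc 0 T},
            ((∑' k : Fin d → ℤ,
                ∏ i : Fin d, max (δ⁻¹ ^ 2 * (δ - |t i - K i * k i|)) 0 : ℝ) : ℂ)
              * F t) -
          ∑' k : {k : Fin d → ℤ // ∀ i, (K i * k i : ℝ) ∈ Icc 0 T},
            ∫ t : Fin d → ℝ,
              ((∏ i : Fin d,
                  max (δ⁻¹ ^ 2 * (δ - |t i - K i * (k : Fin d → ℤ) i|)) 0 : ℝ) : ℂ)
                * F t‖ ≤
        C * M * T ^ (d - 1) * (⨆ i, K i) / ∏ i, K i := by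
  refine ⟨d * 2 ^ (d + 2) * 3 ^ (d - 1), by positivity, ?_⟩
  intro K T δ M hK hKT hδ hδK hM F hF hFM
  have hcard := card_boundaryLattice_le hK hKT hδ hδK
  calc _ ≤ #(boundaryLattice K T δ) * (2 * 2 ^ Fintype.card (Fin d) * M) :=
        norm_setIntegral_tsum_hatPi_mul_sub_tsum_le (fun i => one_pos.trans_le (hK i)) hδ hM hF hFM
    _ ≤ 2 * Fintype.card (Fin d) * (3 * T) ^ (Fintype.card (Fin d) - 1) * (⨆ i, K i) /
          (∏ i, K i) * (2 * 2 ^ Fintype.card (Fin d) * M) := by gcongr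
    _ = _ := by rw [Fintype.card_fin, mul_pow]; ring
end
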